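/- arXiv:2604.05088 — 4 statements merged into one kernel-verified Lean document; each statement's English description precedes it below -/
import Mathlib

section
/- Let f : ℝ^d → ℝ be differentiable at K, let f* ∈ ℝ satisfy f* ≤ f(K), and suppose: (i) the quadratic upper bound f(K') ≤ f(K) + ⟨∇f(K), K' − K⟩ + (L/2)‖K' − K‖₂² holds with constant L > 0 for K' = K − η*·(g + e), where g = ∇f(K), ‖e‖₂ ≤ β‖g‖₂ for some β ∈ [0,1), and η* = (1 − β)/(L(1 + β)²); and (ii) the PL inequality (1/2)‖g‖₂² ≥ μ·(f(K) − f*) holds with constant μ > 0. Then f(K') − f* ≤ (1 − μ(1 − β)²/(L(1 + β)²))·(f(K) − f*). -/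
open scoped RealInnerProductSpace

set_option maxHeartbeats 1600000 in
/-- One-step linear contraction of the optimality gap under a PL inequality at `K`,
for a gradient step along an inexact direction `g + e` with relative error
`β ∈ [0,1)` and stepsize `η* = (1-β)/(L(1+β)²)`. -/
theorem pl_one_step_contraction
    {d : ℕ} (f : EuclideanSpace ℝ (Fin d) → ℝ) (K : EuclideanSpace ℝ (Fin d))
    (hf : DifferentiableAt ℝ f K)
    (fstar : ℝ) (hfstar : fstar ≤ f K)
    (L μ β ηstar : ℝ) (hL : 0 < L) (hμ : 0 < μ) (hβ0 : 0 ≤ β) (hβ1 : β < 1)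
    (hηstar : ηstar = (1 - β) / (L * (1 + β) ^ 2))
    (e : EuclideanSpace ℝ (Fin d))
    (he : ‖e‖ ≤ β * ‖gradient f K‖)
    (hquad : f (K - ηstar • (gradient f K + e)) ≤
      f K + ⟪gradient f K, (K - ηstar • (gradient f K + e)) - K⟫
        + L / 2 * ‖(K - ηstar • (gradient f K + e)) - K‖ ^ 2)
    (hPL : 1 / 2 * ‖gradient f K‖ ^ 2 ≥ μ * (f K - fstar)) :
    f (K - ηstar • (gradient f K + e)) - fstar ≤
      (1 - μ * (1 - β) ^ 2 / (L * (1 + β) ^ 2)) * (f K - fstar) := by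

  set g := gradient f K with hg
  set v := g + e with hv
  have hβpos : (0:ℝ) < 1 + β := by linarith
  have hden : 0 < L * (1 + β) ^ 2 := by positivity
  have hη : 0 ≤ ηstar := by
    rw [hηstar]; apply div_nonneg (by linarith) (le_of_lt hden)
  have hnv : ‖v‖ ≤ (1 + β) * ‖g‖ := by
    calc ‖v‖ ≤ ‖g‖ + ‖e‖ := norm_add_le _ _
    _ ≤ ‖g‖ + β * ‖g‖ := by linarith
    _ = (1 + β) * ‖g‖ := by ring
  have hinner : -(β * ‖g‖ ^ 2) ≤ ⟪g, e⟫ := by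
    have h := abs_le.mp (abs_real_inner_le_norm g e)
    have h2 : ‖g‖ * ‖e‖ ≤ ‖g‖ * (β * ‖g‖) :=
      mul_le_mul_of_nonneg_left he (norm_nonneg g)
    nlinarith
  have hdiff : (K - ηstar • v) - K = -(ηstar • v) := by abel
  have h1 : ⟪g, (K - ηstar • v) - K⟫ = -(ηstar * (‖g‖ ^ 2 + ⟪g, e⟫)) := by
    rw [hdiff, inner_neg_right, real_inner_smul_right, hv, inner_add_right,
      real_inner_self_eq_norm_sq]
  have h2 : ‖(K - ηstar • v) - K‖ = ηstar * ‖v‖ := by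
    rw [hdiff, norm_neg, norm_smul, Real.norm_eq_abs, abs_of_nonneg hη]
  rw [h1, h2] at hquad
  have hvsq : ‖v‖ ^ 2 ≤ (1 + β) ^ 2 * ‖g‖ ^ 2 := by
    nlinarith [norm_nonneg v, norm_nonneg g]
  have hstep : f (K - ηstar • v) ≤
      f K - ηstar * (1 - β) * ‖g‖ ^ 2 + L / 2 * ηstar ^ 2 * (1 + β) ^ 2 * ‖g‖ ^ 2 := by
    have hA : L / 2 * ηstar ^ 2 * ‖v‖ ^ 2 ≤ L / 2 * ηstar ^ 2 * ((1 + β) ^ 2 * ‖g‖ ^ 2) :=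
      mul_le_mul_of_nonneg_left hvsq (by positivity)
    have hB : ηstar * -(β * ‖g‖ ^ 2) ≤ ηstar * ⟪g, e⟫ :=
      mul_le_mul_of_nonneg_left hinner hη
    nlinarith
  have hcoef : -(ηstar * (1 - β)) + L / 2 * ηstar ^ 2 * (1 + β) ^ 2 =
      -((1 - β) ^ 2 / (2 * L * (1 + β) ^ 2)) := by
    rw [hηstar]
    field_simp
    ring
  have hcoefmul : (-(ηstar * (1 - β)) + L / 2 * ηstar ^ 2 * (1 + β) ^ 2) * ‖g‖ ^ 2 =
      -((1 - β) ^ 2 / (2 * L * (1 + β) ^ 2)) * ‖g‖ ^ 2 := by rw [hcoef]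
  have hstep2 : f (K - ηstar • v) ≤ f K - (1 - β) ^ 2 / (2 * L * (1 + β) ^ 2) * ‖g‖ ^ 2 := by
    nlinarith [hcoefmul]
  have hgsq : 2 * μ * (f K - fstar) ≤ ‖g‖ ^ 2 := by linarith
  have hc : 0 ≤ (1 - β) ^ 2 / (2 * L * (1 + β) ^ 2) := by positivity
  have hgap : 0 ≤ f K - fstar := by linarith
  have hfinal : f (K - ηstar • v) - fstar ≤
      f K - fstar - (1 - β) ^ 2 / (2 * L * (1 + β) ^ 2) * (2 * μ * (f K - fstar)) := by
    nlinarith [mul_le_mul_of_nonneg_left hgsq hc]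
  calc f (K - ηstar • v) - fstar ≤
      f K - fstar - (1 - β) ^ 2 / (2 * L * (1 + β) ^ 2) * (2 * μ * (f K - fstar)) := hfinal
  _ = (1 - μ * (1 - β) ^ 2 / (L * (1 + β) ^ 2)) * (f K - fstar) := by
      field_simp
end

section
/- Let f : ℝ^d → ℝ be differentiable, c ∈ ℝ, and S_c = {K : f(K) ≤ c}. Let L > 0, β ∈ [0,1), and 0 < η < 2(1 − β)/(L(1 + β)²). Let K_0 ∈ S_c and define K_{t+1} = K_t − η·ḡ_t for t = 0,…,T−1, where each ḡ_t ∈ ℝ^d satisfies ‖ḡ_t − ∇f(K_t)‖₂ ≤ β‖∇f(K_t)‖₂. Assume that whenever K_t ∈ S_c, the segment {K_t − sη·ḡ_t : s ∈ [0,1]} lies in S_c, and that for all x, y with the segment [x,y] ⊆ S_c one has f(y) ≤ f(x) + ⟨∇f(x), y − x⟩ + (L/2)‖y − x‖₂². Then f(K_{t+1}) ≤ f(K_t) for all t = 0,…,T−1, and consequently K_t ∈ S_c for all t = 0,…,T. -/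
open scoped RealInnerProductSpace

/-- Stability of inexact gradient descent: with per-step relative gradient error at
most `β ∈ [0,1)` and stepsize `0 < η < 2(1-β)/(L(1+β)²)`, the cost is monotonically
nonincreasing along the iterates and all iterates remain in the sublevel set
`S_c = {K : f K ≤ c}`. -/
theorem stability_inexact_gradient_descent
    {d : ℕ} (f : EuclideanSpace ℝ (Fin d) → ℝ) (hf : Differentiable ℝ f)
    (c L β η : ℝ) (hL : 0 < L) (hβ0 : 0 ≤ β) (hβ1 : β < 1)
    (hη : 0 < η) (hη' : η < 2 * (1 - β) / (L * (1 + β) ^ 2))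
    (T : ℕ) (K gbar : ℕ → EuclideanSpace ℝ (Fin d))
    (hK0 : K 0 ∈ {x : EuclideanSpace ℝ (Fin d) | f x ≤ c})
    (hrec : ∀ t < T, K (t + 1) = K t - η • gbar t)
    (herr : ∀ t < T, ‖gbar t - gradient f (K t)‖ ≤ β * ‖gradient f (K t)‖)
    (hseg : ∀ t < T, K t ∈ {x : EuclideanSpace ℝ (Fin d) | f x ≤ c} →
      ∀ s ∈ Set.Icc (0 : ℝ) 1,
        K t - (s * η) • gbar t ∈ {x : EuclideanSpace ℝ (Fin d) | f x ≤ c})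
    (hsmooth : ∀ x y : EuclideanSpace ℝ (Fin d),
      segment ℝ x y ⊆ {z : EuclideanSpace ℝ (Fin d) | f z ≤ c} →
      f y ≤ f x + ⟪gradient f x, y - x⟫ + L / 2 * ‖y - x‖ ^ 2) :
    (∀ t < T, f (K (t + 1)) ≤ f (K t)) ∧
      (∀ t ≤ T, K t ∈ {x : EuclideanSpace ℝ (Fin d) | f x ≤ c}) := by
  have hden : 0 < L * (1 + β) ^ 2 := by positivity
  have hηL : η * (L * (1 + β) ^ 2) < 2 * (1 - β) := by
    rw [← lt_div_iff₀ hden]; exact hη'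
  have key : ∀ t < T, f (K t) ≤ c → f (K (t + 1)) ≤ f (K t) := by
    intro t ht hin
    set g := gradient f (K t) with hg
    have hsub : segment ℝ (K t) (K t - η • gbar t) ⊆
        {z : EuclideanSpace ℝ (Fin d) | f z ≤ c} := by
      intro z hz
      rw [segment_eq_image] at hz
      obtain ⟨s, hs, rfl⟩ := hz
      have := hseg t ht hin s hs
      have heq : (1 - s) • K t + s • (K t - η • gbar t)
          = K t - (s * η) • gbar t := by module
      show (1 - s) • K t + s • (K t - η • gbar t) ∈ {z | f z ≤ c}
      rw [heq]; exact this
    have hsm := hsmooth (K t) (K t - η • gbar t) hsub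
    have hinner : ⟪g, (K t - η • gbar t) - K t⟫ = -(η * ⟪g, gbar t⟫) := by
      have : (K t - η • gbar t) - K t = (-η) • gbar t := by module
      rw [this, real_inner_smul_right]; ring
    have hnorm : ‖(K t - η • gbar t) - K t‖ = η * ‖gbar t‖ := by
      have : (K t - η • gbar t) - K t = (-η) • gbar t := by module
      rw [this, norm_smul]; simp [abs_of_pos hη]
    have herr' := herr t ht
    have hgb : ‖gbar t‖ ≤ (1 + β) * ‖g‖ := by
      calc ‖gbar t‖ = ‖(gbar t - g) + g‖ := by rw [sub_add_cancel]
        _ ≤ ‖gbar t - g‖ + ‖g‖ := norm_add_le _ _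
        _ ≤ β * ‖g‖ + ‖g‖ := by linarith [herr']
        _ = (1 + β) * ‖g‖ := by ring
    have hip : (1 - β) * ‖g‖ ^ 2 ≤ ⟪g, gbar t⟫ := by
      have h1 : ⟪g, gbar t⟫ = ⟪g, g⟫ + ⟪g, gbar t - g⟫ := by
        rw [← inner_add_right]; congr 1; module
      have h2 : |⟪g, gbar t - g⟫| ≤ ‖g‖ * ‖gbar t - g‖ := abs_real_inner_le_norm _ _
      have h3 : ‖g‖ * ‖gbar t - g‖ ≤ ‖g‖ * (β * ‖g‖) := by
        apply mul_le_mul_of_nonneg_left herr' (norm_nonneg _)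
      have h4 : ⟪g, g⟫ = ‖g‖ ^ 2 := real_inner_self_eq_norm_sq g
      have := abs_le.mp h2
      nlinarith
    rw [hrec t ht]
    have hgb2 : ‖gbar t‖ ^ 2 ≤ (1 + β) ^ 2 * ‖g‖ ^ 2 := by
      nlinarith [norm_nonneg (gbar t), norm_nonneg g]
    calc f (K t - η • gbar t)
        ≤ f (K t) + ⟪g, (K t - η • gbar t) - K t⟫
            + L / 2 * ‖(K t - η • gbar t) - K t‖ ^ 2 := hsm
      _ = f (K t) - η * ⟪g, gbar t⟫ + L / 2 * (η ^ 2 * ‖gbar t‖ ^ 2) := by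
          rw [hinner, hnorm]; ring
      _ ≤ f (K t) := by
          have h1 : η * ((1 - β) * ‖g‖ ^ 2) ≤ η * ⟪g, gbar t⟫ :=
            mul_le_mul_of_nonneg_left hip hη.le
          have h2 : L / 2 * (η ^ 2 * ‖gbar t‖ ^ 2)
              ≤ L / 2 * (η ^ 2 * ((1 + β) ^ 2 * ‖g‖ ^ 2)) := by
            apply mul_le_mul_of_nonneg_left _ (by positivity)
            exact mul_le_mul_of_nonneg_left hgb2 (by positivity)
          have h3 : η * (L * (1 + β) ^ 2) * (η * ‖g‖ ^ 2)
              ≤ 2 * (1 - β) * (η * ‖g‖ ^ 2) :=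
            mul_le_mul_of_nonneg_right hηL.le (by positivity)
          nlinarith [h1, h2, h3]
  have hmem : ∀ t ≤ T, K t ∈ {x : EuclideanSpace ℝ (Fin d) | f x ≤ c} := by
    intro t
    induction t with
    | zero => intro _; exact hK0
    | succ n ih =>
      intro hn
      have hnT : n < T := Nat.lt_of_succ_le hn
      have hinn := ih (Nat.le_of_lt hnT)
      have := hseg n hnT hinn 1 ⟨zero_le_one, le_refl 1⟩
      have heq : K n - (1 * η) • gbar n = K (n + 1) := by
        rw [hrec n hnT, one_mul]
      rwa [heq] at this
  exact ⟨fun t ht => key t ht (hmem t (Nat.le_of_lt ht)), hmem⟩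
end

section
/- Let f : ℝ^d → ℝ be differentiable, c ∈ ℝ, S_c = {K : f(K) ≤ c}, and f* = inf_{K ∈ S_c} f(K). Let L > 0, μ > 0, β ∈ [0,1), and η* = (1 − β)/(L(1 + β)²). Let K_0 ∈ S_c and define K_{t+1} = K_t − η*·ḡ_t for t = 0,…,T−1, where each ḡ_t ∈ ℝ^d satisfies ‖ḡ_t − ∇f(K_t)‖₂ ≤ β‖∇f(K_t)‖₂. Assume that whenever K_t ∈ S_c, the segment {K_t − sη*·ḡ_t : s ∈ [0,1]} lies in S_c; that for all x, y with [x,y] ⊆ S_c one has f(y) ≤ f(x) + ⟨∇f(x), y − x⟩ + (L/2)‖y − x‖₂²; and that (1/2)‖∇f(K)‖₂² ≥ μ(f(K) − f*) for all K ∈ S_c. Then for all t = 0,…,T: f(K_t) − f* ≤ (1 − μ(1 − β)²/(L(1 + β)²))^t · (f(K_0) − f*). -/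
open scoped RealInnerProductSpace

set_option maxHeartbeats 1000000 in
/-- Linear convergence of inexact gradient descent: under `L`-smoothness on the
sublevel set `S_c = {K : f K ≤ c}`, a PL condition with constant `μ > 0` relative to
`f* = inf_{K ∈ S_c} f(K)`, per-step relative gradient error at most `β ∈ [0,1)`, and
stepsize `η* = (1-β)/(L(1+β)²)`, the optimality gap decays geometrically at rate
`1 - μ(1-β)²/(L(1+β)²)`. -/
theorem linear_convergence_inexact_gradient_descent
    {d : ℕ} (f : EuclideanSpace ℝ (Fin d) → ℝ) (hf : Differentiable ℝ f)
    (c L μ β ηstar fstar : ℝ) (hL : 0 < L) (hμ : 0 < μ) (hβ0 : 0 ≤ β) (hβ1 : β < 1)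
    (hηstar : ηstar = (1 - β) / (L * (1 + β) ^ 2))
    (hfstar : IsGLB (f '' {x : EuclideanSpace ℝ (Fin d) | f x ≤ c}) fstar)
    (T : ℕ) (K gbar : ℕ → EuclideanSpace ℝ (Fin d))
    (hK0 : K 0 ∈ {x : EuclideanSpace ℝ (Fin d) | f x ≤ c})
    (hrec : ∀ t < T, K (t + 1) = K t - ηstar • gbar t)
    (herr : ∀ t < T, ‖gbar t - gradient f (K t)‖ ≤ β * ‖gradient f (K t)‖)
    (hseg : ∀ t < T, K t ∈ {x : EuclideanSpace ℝ (Fin d) | f x ≤ c} →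
      ∀ s ∈ Set.Icc (0 : ℝ) 1,
        K t - (s * ηstar) • gbar t ∈ {x : EuclideanSpace ℝ (Fin d) | f x ≤ c})
    (hsmooth : ∀ x y : EuclideanSpace ℝ (Fin d),
      segment ℝ x y ⊆ {z : EuclideanSpace ℝ (Fin d) | f z ≤ c} →
      f y ≤ f x + ⟪gradient f x, y - x⟫ + L / 2 * ‖y - x‖ ^ 2)
    (hPL : ∀ x ∈ {x : EuclideanSpace ℝ (Fin d) | f x ≤ c},
      1 / 2 * ‖gradient f x‖ ^ 2 ≥ μ * (f x - fstar)) :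
    ∀ t ≤ T, f (K t) - fstar ≤
      (1 - μ * (1 - β) ^ 2 / (L * (1 + β) ^ 2)) ^ t * (f (K 0) - fstar) := by
  classical
  set S := {x : EuclideanSpace ℝ (Fin d) | f x ≤ c} with hS
  set ρ := 1 - μ * (1 - β) ^ 2 / (L * (1 + β) ^ 2) with hρ
  have hβ' : (0:ℝ) < 1 - β := by linarith
  have hA : (0:ℝ) < L * (1 + β) ^ 2 := by positivity
  have hη : 0 < ηstar := by rw [hηstar]; positivity
  have hglb : ∀ x ∈ S, fstar ≤ f x := fun x hx => hfstar.1 ⟨x, hx, rfl⟩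
  have hcoef : ηstar * (1 - β) - L / 2 * ηstar ^ 2 * (1 + β) ^ 2
      = (1 - β) ^ 2 / (2 * (L * (1 + β) ^ 2)) := by
    rw [hηstar]; field_simp; ring
  have step : ∀ t < T, K t ∈ S →
      K (t + 1) ∈ S ∧ f (K (t + 1)) - fstar ≤ ρ * (f (K t) - fstar) := by
    intro t ht hKt
    have hmem : K (t + 1) ∈ S := by
      have := hseg t ht hKt 1 ⟨zero_le_one, le_refl 1⟩
      rw [one_mul] at this
      rw [hrec t ht]
      exact this
    refine ⟨hmem, ?_⟩
    set x := K t with hx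
    set g := gbar t with hg
    set gr := gradient f x with hgr
    have herrt : ‖g - gr‖ ≤ β * ‖gr‖ := herr t ht
    have hgnorm : ‖g‖ ≤ (1 + β) * ‖gr‖ := by
      have h1 : ‖g‖ - ‖gr‖ ≤ ‖g - gr‖ := norm_sub_norm_le g gr
      linarith
    have hinner : (1 - β) * ‖gr‖ ^ 2 ≤ ⟪gr, g⟫ := by
      have h1 : |⟪gr, g - gr⟫| ≤ ‖gr‖ * ‖g - gr‖ := abs_real_inner_le_norm gr (g - gr)
      have h2 : ⟪gr, g - gr⟫ = ⟪gr, g⟫ - ⟪gr, gr⟫ := inner_sub_right gr g gr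
      have h3 : ⟪gr, gr⟫ = ‖gr‖ ^ 2 := real_inner_self_eq_norm_sq gr
      have h4 : ‖gr‖ * ‖g - gr‖ ≤ ‖gr‖ * (β * ‖gr‖) :=
        mul_le_mul_of_nonneg_left herrt (norm_nonneg gr)
      have h5 : -(‖gr‖ * ‖g - gr‖) ≤ ⟪gr, g - gr⟫ := neg_le_of_abs_le h1
      nlinarith
    have hsub : segment ℝ x (x - ηstar • g) ⊆ S := by
      intro z hz
      obtain ⟨a, b, ha, hb, hab, hz⟩ := hz
      have hzeq : z = x - (b * ηstar) • g := by
        rw [← hz]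
        have hax : a = 1 - b := by linarith
        rw [hax]; module
      rw [hzeq]
      exact hseg t ht hKt b ⟨hb, by linarith⟩
    have hsm := hsmooth x (x - ηstar • g) hsub
    have hyx : x - ηstar • g - x = -(ηstar • g) := by abel
    rw [hyx] at hsm
    have hin2 : ⟪gr, -(ηstar • g)⟫ = -(ηstar * ⟪gr, g⟫) := by
      rw [inner_neg_right, real_inner_smul_right]
    have hn2 : ‖-(ηstar • g)‖ = ηstar * ‖g‖ := by
      rw [norm_neg, norm_smul, Real.norm_eq_abs, abs_of_pos hη]
    rw [hin2, hn2] at hsm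
    have hPLx := hPL x hKt
    have hgap0 : 0 ≤ f x - fstar := sub_nonneg.2 (hglb x hKt)
    have hgsq : ‖g‖ ^ 2 ≤ (1 + β) ^ 2 * ‖gr‖ ^ 2 := by
      nlinarith [norm_nonneg g, norm_nonneg gr]
    have e1 : ηstar * ((1 - β) * ‖gr‖ ^ 2) ≤ ηstar * ⟪gr, g⟫ :=
      mul_le_mul_of_nonneg_left hinner hη.le
    have e2 : L / 2 * ηstar ^ 2 * ‖g‖ ^ 2 ≤ L / 2 * ηstar ^ 2 * ((1 + β) ^ 2 * ‖gr‖ ^ 2) :=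
      mul_le_mul_of_nonneg_left hgsq (by positivity)
    have key : f (x - ηstar • g) ≤ f x
        - ((1 - β) ^ 2 / (2 * (L * (1 + β) ^ 2))) * ‖gr‖ ^ 2 := by
      rw [← hcoef]
      have hsm' : f (x - ηstar • g) ≤ f x - ηstar * ⟪gr, g⟫
          + L / 2 * ηstar ^ 2 * ‖g‖ ^ 2 := by
        have h : (ηstar * ‖g‖) ^ 2 = ηstar ^ 2 * ‖g‖ ^ 2 := by ring
        rw [h] at hsm; linarith
      nlinarith [e1, e2, hsm']
    have hρeq : ρ * (f x - fstar)
        = (f x - fstar) - 2 * μ * ((1 - β) ^ 2 / (2 * (L * (1 + β) ^ 2))) * (f x - fstar) := by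
      rw [hρ]; field_simp
    have hy : K (t + 1) = x - ηstar • g := hrec t ht
    rw [hy, hρeq]
    have hcpos : 0 < (1 - β) ^ 2 / (2 * (L * (1 + β) ^ 2)) := by positivity
    have hPL2 : (1 - β) ^ 2 / (2 * (L * (1 + β) ^ 2)) * (μ * (f x - fstar))
        ≤ (1 - β) ^ 2 / (2 * (L * (1 + β) ^ 2)) * (1 / 2 * ‖gr‖ ^ 2) :=
      mul_le_mul_of_nonneg_left hPLx hcpos.le
    nlinarith [key, hPL2]
  have main : ∀ t ≤ T, K t ∈ S ∧ f (K t) - fstar ≤ ρ ^ t * (f (K 0) - fstar) := by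
    intro t
    induction t with
    | zero => intro _; exact ⟨hK0, by simp⟩
    | succ n ih =>
      intro hn
      obtain ⟨hmem, hgap⟩ := ih (Nat.le_of_succ_le hn)
      have hnT : n < T := Nat.lt_of_succ_le hn
      obtain ⟨hmem', hstep⟩ := step n hnT hmem
      refine ⟨hmem', ?_⟩
      by_cases hρ0 : 0 ≤ ρ
      · calc f (K (n + 1)) - fstar ≤ ρ * (f (K n) - fstar) := hstep
          _ ≤ ρ * (ρ ^ n * (f (K 0) - fstar)) := mul_le_mul_of_nonneg_left hgap hρ0
          _ = ρ ^ (n + 1) * (f (K 0) - fstar) := by ring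
      · push_neg at hρ0
        have hgap0 : 0 ≤ f (K 0) - fstar := sub_nonneg.2 (hglb _ hK0)
        have hT0 : 0 < T := (Nat.zero_le n).trans_lt hnT
        obtain ⟨hm1, hs1⟩ := step 0 hT0 hK0
        have hg1 : 0 ≤ f (K 1) - fstar := sub_nonneg.2 (hglb _ hm1)
        have hz : f (K 0) - fstar = 0 := by nlinarith
        have hgn0 : 0 ≤ f (K n) - fstar := sub_nonneg.2 (hglb _ hmem)
        have hgn : f (K n) - fstar = 0 := by
          rw [hz] at hgap; simp at hgap; linarith
        have hgn1 : 0 ≤ f (K (n + 1)) - fstar := sub_nonneg.2 (hglb _ hmem')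
        rw [hz, mul_zero]
        rw [hgn, mul_zero] at hstep
        linarith
  intro t ht
  exact (main t ht).2
end

section
/- There exists an absolute constant C > 0 such that the following holds. For every d ≥ 2, every M ≥ 1, every δ ∈ (0,1), and all fixed vectors Δ_1,…,Δ_M ∈ ℝ^d satisfying (1/M)·Σ_{n=1}^M ‖Δ_n‖₂² ≤ σ² and max_{1≤n≤M} ‖Δ_n‖₂ ≤ B for some σ, B ≥ 0: if v_1,…,v_M are i.i.d. normalized Rademacher vectors in ℝ^d (each v_n = u_n/√d with u_n uniform on {−1,+1}^d), then with probability at least 1 − δ/2, ‖(1/M)·Σ_{n=1}^M (d·v_n v_nᵀ − I_d)·Δ_n‖₂ ≤ C·(σ·√((d−1)·log(2d/δ)/M) + B·(d−1)·log(2d/δ)/M). -/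
/-!
The `i`-th coordinate of the error is the chaos `∑ₙ ∑_{j ≠ i} M⁻¹ Δₙⱼ εₙᵢ εₙⱼ`: the diagonal
drops out because `d vₙᵢ² = 1`. Replacing, in every row `n`, each sign `εₙⱼ` with `j ≠ i` by
`εₙⱼ εₙᵢ` is a bijection of the sign cube that turns this chaos into the Rademacher sum
`∑ₙ ∑_{j ≠ i} M⁻¹ Δₙⱼ εₙⱼ`, whose variance proxy is at most `σ² / M`. Hoeffding's bound at level
`t = 2 log (2d/δ)`, doubled for the absolute value and summed over the `d` coordinates, leaves an
exceptional set of probability at most `2d e⁻ᵗ = δ² / (2d) ≤ δ / 2`. Off that set every coordinate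
is at most `2σ √(log (2d/δ) / M)`, so the norm is at most
`2σ √(d log (2d/δ) / M) ≤ 3σ √((d - 1) log (2d/δ) / M)`.
-/

open Finset Real Matrix

noncomputable def boolSign (b : Bool) : ℝ := if b then 1 else -1

@[simp] lemma boolSign_true : boolSign true = 1 := rfl

@[simp] lemma boolSign_false : boolSign false = -1 := rfl

lemma boolSign_mul_self (b : Bool) : boolSign b * boolSign b = 1 := by
  cases b <;> norm_num

lemma boolSign_beq (a b : Bool) : boolSign (a == b) = boolSign a * boolSign b := by
  cases a <;> cases b <;> norm_num

lemma sum_bool_exp_mul_boolSign_le (c : ℝ) :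
    ∑ b : Bool, exp (c * boolSign b) ≤ 2 * exp (c ^ 2 / 2) := by
  have h := cosh_le_exp_half_sq c
  rw [cosh_eq] at h
  simp only [Fintype.sum_bool, boolSign_true, boolSign_false, mul_one, mul_neg]
  linarith

lemma card_filter_exists_le {α β : Type*} [Fintype α] [Fintype β] (p : β → α → Prop)
    [∀ i, DecidablePred (p i)] [DecidablePred fun a => ∃ i, p i a] :
    #{a | ∃ i, p i a} ≤ ∑ i, #{a | p i a} := by
  classical
  refine (card_le_card fun a ha => ?_).trans card_biUnion_le
  obtain ⟨i, hi⟩ := (mem_filter.1 ha).2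
  exact mem_biUnion.2 ⟨i, mem_univ i, mem_filter.2 ⟨mem_univ a, hi⟩⟩

def flipRowsBy {ι κ : Type*} [DecidableEq κ] (i : κ) : Equiv.Perm (ι → κ → Bool) :=
  Function.Involutive.toPerm (fun ω n j => if j = i then ω n i else (ω n j == ω n i)) <| by
    intro ω
    funext n j
    by_cases h : j = i
    · simp [h]
    · simp only [h, if_false, if_true]
      cases ω n i <;> cases ω n j <;> rfl

lemma flipRowsBy_apply {ι κ : Type*} [DecidableEq κ] (i : κ) (ω : ι → κ → Bool) (n : ι) (j : κ) :
    flipRowsBy i ω n j = if j = i then ω n i else (ω n j == ω n i) :=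
  rfl

section RademacherCube

variable {ι κ : Type*} [Fintype ι] [Fintype κ] [DecidableEq ι] [DecidableEq κ]

noncomputable def rademacherSum (c : ι → κ → ℝ) (ω : ι → κ → Bool) : ℝ :=
  ∑ n, ∑ j, c n j * boolSign (ω n j)

lemma sum_exp_rademacherSum_le (c : ι → κ → ℝ) :
    ∑ ω, exp (rademacherSum c ω)
      ≤ Fintype.card (ι → κ → Bool) * exp ((∑ n, ∑ j, c n j ^ 2) / 2) := by
  calc ∑ ω, exp (rademacherSum c ω) = ∏ n, ∏ j, ∑ b, exp (c n j * boolSign b) := by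
        simp_rw [Fintype.prod_sum, rademacherSum, exp_sum]
    _ ≤ ∏ n : ι, ∏ j : κ, 2 * exp (c n j ^ 2 / 2) := by
        gcongr with n _ j _
        exact sum_bool_exp_mul_boolSign_le _
    _ = _ := by
        simp only [prod_mul_distrib, prod_const, ← exp_sum, ← sum_div, card_univ,
          Fintype.card_fun, Fintype.card_bool]
        push_cast
        ring

lemma card_filter_le_rademacherSum_mul_exp_le (c : ι → κ → ℝ) (s : ℝ) {l : ℝ} (hl : 0 ≤ l) :
    #{ω | s ≤ rademacherSum c ω} * exp (l * s)
      ≤ Fintype.card (ι → κ → Bool) * exp (l ^ 2 * (∑ n, ∑ j, c n j ^ 2) / 2) := by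
  have hscale : ∀ ω, l * rademacherSum c ω = rademacherSum (fun n j => l * c n j) ω := by
    intro ω
    simp only [rademacherSum, mul_sum, mul_assoc]
  calc #{ω | s ≤ rademacherSum c ω} * exp (l * s)
      ≤ ∑ ω ∈ {ω | s ≤ rademacherSum c ω}, exp (l * rademacherSum c ω) := by
        rw [← nsmul_eq_mul]
        exact card_nsmul_le_sum _ _ _ fun ω hω =>
          exp_le_exp.2 (mul_le_mul_of_nonneg_left (mem_filter.1 hω).2 hl)
    _ ≤ ∑ ω, exp (rademacherSum (fun n j => l * c n j) ω) := by
        simp_rw [hscale]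
        exact sum_le_sum_of_subset_of_nonneg (subset_univ _) fun ω _ _ => (exp_pos _).le
    _ ≤ _ := by
        refine (sum_exp_rademacherSum_le _).trans_eq ?_
        simp only [mul_pow, ← mul_sum]

lemma card_filter_lt_rademacherSum_le {c : ι → κ → ℝ} {V : ℝ} (hc : ∑ n, ∑ j, c n j ^ 2 ≤ V)
    {t : ℝ} (ht : 0 ≤ t) :
    #{ω | √(2 * V * t) < rademacherSum c ω} ≤ Fintype.card (ι → κ → Bool) * exp (-t) := by
  rcases le_or_gt V 0 with hV | hV
  · have hc0 : ∀ n j, c n j = 0 := fun n j => by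
      have h1 : c n j ^ 2 ≤ ∑ j, c n j ^ 2 :=
        single_le_sum (f := fun j => c n j ^ 2) (fun _ _ => sq_nonneg _) (mem_univ j)
      have h2 : ∑ j, c n j ^ 2 ≤ ∑ n, ∑ j, c n j ^ 2 :=
        single_le_sum (f := fun n => ∑ j, c n j ^ 2)
          (fun _ _ => sum_nonneg fun _ _ => sq_nonneg _) (mem_univ n)
      nlinarith
    have hempty : #{ω | √(2 * V * t) < rademacherSum c ω} = 0 := by
      simp [rademacherSum, hc0, sqrt_nonneg]
    rw [hempty, Nat.cast_zero]
    positivity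
  · set s := √(2 * V * t)
    have hs : s ^ 2 = 2 * V * t := sq_sqrt (by positivity)
    have hexp : (s / V) ^ 2 * V / 2 - s / V * s = -t := by
      rw [div_pow, hs]
      field_simp
      linear_combination -hs
    have hchernoff := card_filter_le_rademacherSum_mul_exp_le c s (l := s / V) (by positivity)
    calc (#{ω | s < rademacherSum c ω} : ℝ)
        ≤ #{ω | s ≤ rademacherSum c ω} := by
          exact_mod_cast card_le_card fun ω hω => by
            simp only [mem_filter] at hω ⊢
            exact ⟨hω.1, hω.2.le⟩
      _ ≤ Fintype.card (ι → κ → Bool) * exp ((s / V) ^ 2 * V / 2) / exp (s / V * s) := by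
          rw [le_div_iff₀ (exp_pos _)]
          refine hchernoff.trans ?_
          gcongr
      _ = Fintype.card (ι → κ → Bool) * exp (-t) := by
          rw [mul_div_assoc, ← exp_sub, hexp]

lemma card_filter_lt_abs_rademacherSum_le {c : ι → κ → ℝ} {V : ℝ}
    (hc : ∑ n, ∑ j, c n j ^ 2 ≤ V) {t : ℝ} (ht : 0 ≤ t) :
    #{ω | √(2 * V * t) < |rademacherSum c ω|}
      ≤ 2 * Fintype.card (ι → κ → Bool) * exp (-t) := by
  have hneg : ∀ ω, -rademacherSum c ω = rademacherSum (fun n j => -c n j) ω := by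
    intro ω
    simp only [rademacherSum, neg_mul, sum_neg_distrib]
  have hc' : ∑ n, ∑ j, (-c n j) ^ 2 ≤ V := by simpa only [neg_sq] using hc
  calc (#{ω | √(2 * V * t) < |rademacherSum c ω|} : ℝ)
      ≤ #(({ω | √(2 * V * t) < rademacherSum c ω} : Finset _) ∪
          ({ω | √(2 * V * t) < rademacherSum (fun n j => -c n j) ω} : Finset _)) := by
        refine mod_cast card_le_card fun ω => ?_
        simp only [mem_filter, mem_union, mem_univ, true_and, ← hneg]
        exact lt_abs.1
    _ ≤ _ := by
        refine (Nat.cast_le.2 (card_union_le _ _)).trans ?_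
        push_cast
        linarith [card_filter_lt_rademacherSum_le hc ht, card_filter_lt_rademacherSum_le hc' ht]

lemma card_filter_sum_mul_boolSign_mul_boolSign (i : κ) {c : ι → κ → ℝ} (hc : ∀ n, c n i = 0)
    (p : ℝ → Prop) [DecidablePred p] :
    #{ω : ι → κ → Bool | p (∑ n, ∑ j, c n j * (boolSign (ω n i) * boolSign (ω n j)))}
      = #{ω | p (rademacherSum c ω)} := by
  refine card_equiv (flipRowsBy i) fun ω => ?_
  suffices rademacherSum c (flipRowsBy i ω)
      = ∑ n, ∑ j, c n j * (boolSign (ω n i) * boolSign (ω n j)) by simp [this]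
  refine sum_congr rfl fun n _ => sum_congr rfl fun j _ => ?_
  by_cases h : j = i
  · simp [h, hc]
  · simp [flipRowsBy_apply, h, boolSign_beq, mul_comm]

lemma card_filter_exists_lt_abs_sum_mul_boolSign_mul_boolSign_le {c : κ → ι → κ → ℝ}
    (hdiag : ∀ i n, c i n i = 0) {V : ℝ} (hc : ∀ i, ∑ n, ∑ j, c i n j ^ 2 ≤ V) {t : ℝ}
    (ht : 0 ≤ t) :
    #{ω : ι → κ → Bool | ∃ i, √(2 * V * t)
        < |∑ n, ∑ j, c i n j * (boolSign (ω n i) * boolSign (ω n j))|}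
      ≤ Fintype.card κ * (2 * Fintype.card (ι → κ → Bool) * exp (-t)) := by
  calc (#{ω : ι → κ → Bool | ∃ i, √(2 * V * t)
        < |∑ n, ∑ j, c i n j * (boolSign (ω n i) * boolSign (ω n j))|} : ℝ)
      ≤ ∑ i, (#{ω : ι → κ → Bool | √(2 * V * t)
          < |∑ n, ∑ j, c i n j * (boolSign (ω n i) * boolSign (ω n j))|} : ℝ) :=
        mod_cast card_filter_exists_le _
    _ ≤ ∑ _i : κ, 2 * Fintype.card (ι → κ → Bool) * exp (-t) := by
        refine sum_le_sum fun i _ => ?_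
        rw [card_filter_sum_mul_boolSign_mul_boolSign i (hdiag i) (fun x => √(2 * V * t) < |x|)]
        exact card_filter_lt_abs_rademacherSum_le (hc i) ht
    _ = _ := by simp

end RademacherCube

lemma EuclideanSpace.norm_le_sqrt_card_mul {ι : Type*} [Fintype ι] {x : EuclideanSpace ℝ ι}
    {s : ℝ} (hs : 0 ≤ s) (hx : ∀ i, |x i| ≤ s) : ‖x‖ ≤ √(Fintype.card ι) * s := by
  rw [← sqrt_sq hs, ← sqrt_mul (Nat.cast_nonneg _), ← sqrt_sq (norm_nonneg x),
    EuclideanSpace.real_norm_sq_eq]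
  refine sqrt_le_sqrt ?_
  calc ∑ i, x i ^ 2 ≤ ∑ _i : ι, s ^ 2 := sum_le_sum fun i _ => sq_le_sq' (abs_le.1 (hx i)).1
        (abs_le.1 (hx i)).2
    _ = Fintype.card ι * s ^ 2 := by simp

lemma smul_vecMulVec_inv_sqrt_mul {κ : Type*} {a : ℝ} (ha : 0 < a) (x : κ → ℝ) :
    a • vecMulVec (fun j => (√a)⁻¹ * x j) (fun j => (√a)⁻¹ * x j) = vecMulVec x x := by
  ext i j
  have h : (√a)⁻¹ * (√a)⁻¹ = a⁻¹ := by rw [← mul_inv, mul_self_sqrt ha.le]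
  simp only [Matrix.smul_apply, vecMulVec_apply, smul_eq_mul]
  calc a * ((√a)⁻¹ * x i * ((√a)⁻¹ * x j)) = a * ((√a)⁻¹ * (√a)⁻¹) * (x i * x j) := by ring
    _ = x i * x j := by rw [h, mul_inv_cancel₀ ha.ne', one_mul]

lemma vecMulVec_sub_one_mulVec_apply {κ : Type*} [Fintype κ] [DecidableEq κ] {s : κ → ℝ}
    (hs : ∀ j, s j * s j = 1) (x : κ → ℝ) (i : κ) :
    ((vecMulVec s s - 1) *ᵥ x) i = ∑ j, (if j = i then 0 else x j) * (s i * s j) := by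
  have hsplit : ∀ j, (if j = i then 0 else x j) * (s i * s j)
      = x j * (s i * s j) - if j = i then x j * (s i * s j) else 0 := by
    intro j
    split_ifs <;> ring
  rw [sum_congr rfl fun j _ => hsplit j, sum_sub_distrib, sum_ite_eq', if_pos (mem_univ i), hs,
    mul_one, sub_mulVec, one_mulVec, Pi.sub_apply]
  simp only [mulVec, dotProduct, vecMulVec_apply]
  congr 1
  exact sum_congr rfl fun j _ => by ring

lemma smul_sum_toEuclideanLin_rademacher_apply {ι κ : Type*} [Fintype ι] [Fintype κ]
    [DecidableEq κ] {a : ℝ} (ha : 0 < a) (r : ℝ) (ω : ι → κ → Bool) (Δ : ι → EuclideanSpace ℝ κ)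
    (i : κ) :
    (r • ∑ n, toEuclideanLin (a • vecMulVec (fun j => (√a)⁻¹ * boolSign (ω n j))
        (fun j => (√a)⁻¹ * boolSign (ω n j)) - 1) (Δ n)) i
      = ∑ n, ∑ j, (if j = i then 0 else r * Δ n j) * (boolSign (ω n i) * boolSign (ω n j)) := by
  simp only [smul_vecMulVec_inv_sqrt_mul ha, PiLp.smul_apply, WithLp.ofLp_sum, Finset.sum_apply,
    toLpLin_apply, smul_eq_mul, mul_sum]
  refine sum_congr rfl fun n _ => ?_
  rw [vecMulVec_sub_one_mulVec_apply (fun j => boolSign_mul_self _), mul_sum]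
  refine sum_congr rfl fun j _ => ?_
  split_ifs <;> ring

lemma norm_smul_sum_toEuclideanLin_rademacher_le {ι κ : Type*} [Fintype ι] [Fintype κ]
    [DecidableEq κ] {a : ℝ} (ha : 0 < a) (r : ℝ) (ω : ι → κ → Bool) (Δ : ι → EuclideanSpace ℝ κ)
    {s : ℝ} (hs : 0 ≤ s)
    (h : ∀ i, |∑ n, ∑ j, (if j = i then 0 else r * Δ n j) * (boolSign (ω n i) * boolSign (ω n j))|
      ≤ s) :
    ‖r • ∑ n, toEuclideanLin (a • vecMulVec (fun j => (√a)⁻¹ * boolSign (ω n j))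
        (fun j => (√a)⁻¹ * boolSign (ω n j)) - 1) (Δ n)‖ ≤ √(Fintype.card κ) * s :=
  EuclideanSpace.norm_le_sqrt_card_mul hs fun i => by
    rw [smul_sum_toEuclideanLin_rademacher_apply ha]
    exact h i

lemma sum_sum_ite_sq_le {ι κ : Type*} [Fintype ι] [Fintype κ] [DecidableEq κ] (r : ℝ)
    (Δ : ι → EuclideanSpace ℝ κ) (i : κ) :
    ∑ n, ∑ j, (if j = i then 0 else r * Δ n j) ^ 2 ≤ r ^ 2 * ∑ n, ‖Δ n‖ ^ 2 := by
  rw [mul_sum]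
  refine sum_le_sum fun n _ => ?_
  rw [EuclideanSpace.real_norm_sq_eq, mul_sum]
  refine sum_le_sum fun j _ => ?_
  split_ifs
  · rw [zero_pow two_ne_zero]
    positivity
  · rw [mul_pow]

lemma ofReal_one_sub_le_uniformOfFintype_toMeasure {Ω : Type*} [Fintype Ω] [Nonempty Ω]
    [MeasurableSpace Ω] [MeasurableSingletonClass Ω] (P : Ω → Prop) [DecidablePred P] {q : ℝ}
    (h : (#{ω | ¬ P ω} : ℝ) ≤ q * Fintype.card Ω) :
    ENNReal.ofReal (1 - q) ≤ (PMF.uniformOfFintype Ω).toMeasure {ω | P ω} := by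
  have hN : (0 : ℝ) < Fintype.card Ω := Nat.cast_pos.2 Fintype.card_pos
  have hsplit : (#{ω | P ω} : ℝ) + #{ω | ¬ P ω} = Fintype.card Ω := by
    exact_mod_cast card_filter_add_card_filter_not (s := univ) P
  rw [PMF.toMeasure_uniformOfFintype_apply _ (Set.toFinite _).measurableSet,
    Fintype.card_subtype, ← ENNReal.ofReal_natCast, ← ENNReal.ofReal_natCast (Fintype.card Ω),
    ← ENNReal.ofReal_div_of_pos hN]
  simp only [Set.mem_ofPred_eq]
  refine ENNReal.ofReal_le_ofReal ((le_div_iff₀ hN).2 ?_)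
  linarith

lemma mul_two_mul_exp_neg_two_mul_log_le {d δ : ℝ} (hd : 1 ≤ d) (hδ0 : 0 < δ) (hδ1 : δ ≤ 1) :
    d * (2 * exp (-(2 * log (2 * d / δ)))) ≤ δ / 2 := by
  have hexp : exp (log (2 * d / δ)) = 2 * d / δ := exp_log (by positivity)
  rw [exp_neg, two_mul (log _), exp_add, hexp]
  field_simp
  nlinarith

lemma sqrt_mul_sqrt_two_mul_two_mul_le {d σ L M : ℝ} (hd : 2 ≤ d) (hσ : 0 ≤ σ) (hL : 0 ≤ L)
    (hM : 0 ≤ M) : √d * √(2 * (σ ^ 2 / M) * (2 * L)) ≤ 3 * (σ * √((d - 1) * L / M)) := by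
  have hrhs : 3 * (σ * √((d - 1) * L / M)) = √((3 * σ) ^ 2 * ((d - 1) * L / M)) := by
    rw [sqrt_mul (by positivity), sqrt_sq (by positivity), mul_assoc]
  rw [← sqrt_mul (by linarith), hrhs]
  refine sqrt_le_sqrt ?_
  have hw : 0 ≤ σ ^ 2 * L / M := by positivity
  calc d * (2 * (σ ^ 2 / M) * (2 * L)) = 4 * d * (σ ^ 2 * L / M) := by ring
    _ ≤ 9 * (d - 1) * (σ ^ 2 * L / M) := mul_le_mul_of_nonneg_right (by linarith) hw
    _ = _ := by ring

/-- Vector-Bernstein concentration for the heterogeneity part of the scalar-projection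
error: there is an absolute constant `C > 0` such that for i.i.d. normalized
Rademacher directions `v₁,…,v_M` in `ℝ^d` and fixed vectors `Δ₁,…,Δ_M` with
mean-square bound `σ²` and uniform bound `B`, with probability at least `1 - δ/2`,
`‖(1/M) Σₙ (d vₙ vₙᵀ - I) Δₙ‖₂ ≤ C(σ√((d-1)log(2d/δ)/M) + B(d-1)log(2d/δ)/M)`. -/
theorem vector_bernstein_heterogeneity_part :
    ∃ C > (0 : ℝ), ∀ (d M : ℕ), 2 ≤ d → 1 ≤ M → ∀ δ : ℝ, 0 < δ → δ < 1 →
      ∀ (Δ : Fin M → EuclideanSpace ℝ (Fin d)) (σ B : ℝ), 0 ≤ σ → 0 ≤ B →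
      (M : ℝ)⁻¹ * ∑ n, ‖Δ n‖ ^ 2 ≤ σ ^ 2 →
      (∀ n, ‖Δ n‖ ≤ B) →
      ∀ v : (Fin M → Fin d → Bool) → Fin M → Fin d → ℝ,
      (∀ ω n i, v ω n i = (Real.sqrt d)⁻¹ * (if ω n i then 1 else -1)) →
      ENNReal.ofReal (1 - δ / 2) ≤
        (PMF.uniformOfFintype (Fin M → Fin d → Bool)).toMeasure
          {ω | ‖(M : ℝ)⁻¹ • ∑ n, Matrix.toEuclideanLin
                  ((d : ℝ) • Matrix.vecMulVec (v ω n) (v ω n)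
                    - (1 : Matrix (Fin d) (Fin d) ℝ)) (Δ n)‖
            ≤ C * (σ * Real.sqrt (((d : ℝ) - 1) * Real.log (2 * d / δ) / M)
                + B * (((d : ℝ) - 1) * Real.log (2 * d / δ) / M))} := by
  refine ⟨3, by norm_num, fun d M hd hM δ hδ0 hδ1 Δ σ B hσ hB hΔσ _ v hv => ?_⟩
  have hd2 : (2 : ℝ) ≤ d := mod_cast hd
  have hM0 : (0 : ℝ) < M := mod_cast hM
  set L := log (2 * d / δ)
  have hL : 0 ≤ L := log_nonneg ((one_le_div hδ0).2 (by linarith))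
  obtain rfl : v = fun ω n j => (√(d : ℝ))⁻¹ * boolSign (ω n j) := by
    funext ω n j
    exact hv ω n j
  set c : Fin d → Fin M → Fin d → ℝ := fun i n j => if j = i then 0 else (M : ℝ)⁻¹ * Δ n j
  have hc : ∀ i, ∑ n, ∑ j, c i n j ^ 2 ≤ σ ^ 2 / M := fun i =>
    (sum_sum_ite_sq_le _ Δ i).trans <| by
      rw [sq, mul_assoc, div_eq_inv_mul]
      exact mul_le_mul_of_nonneg_left hΔσ (by positivity)
  refine ofReal_one_sub_le_uniformOfFintype_toMeasure _ ?_
  calc _ ≤ (#{ω : Fin M → Fin d → Bool | ∃ i, √(2 * (σ ^ 2 / M) * (2 * L))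
        < |∑ n, ∑ j, c i n j * (boolSign (ω n i) * boolSign (ω n j))|} : ℝ) := by
        refine Nat.cast_le.2 (card_le_card fun ω hω => ?_)
        simp only [mem_filter, mem_univ, true_and] at hω ⊢
        by_contra! hsmall
        refine hω ((norm_smul_sum_toEuclideanLin_rademacher_le (by positivity) _ ω Δ
          (sqrt_nonneg _) hsmall).trans ?_)
        rw [Fintype.card_fin]
        refine (sqrt_mul_sqrt_two_mul_two_mul_le hd2 hσ hL hM0.le).trans ?_
        gcongr
        exact le_add_of_nonneg_right
          (mul_nonneg hB (div_nonneg (mul_nonneg (by linarith) hL) hM0.le))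
    _ ≤ d * (2 * Fintype.card (Fin M → Fin d → Bool) * exp (-(2 * L))) := by
        -- `∃ i : Fin d` is decided by `Nat.decidableExistsFin`, not by the generic instance
        convert card_filter_exists_lt_abs_sum_mul_boolSign_mul_boolSign_le (c := c)
          (by simp [c]) hc (by positivity : 0 ≤ 2 * L) using 4
        rw [Fintype.card_fin]
    _ = d * (2 * exp (-(2 * L))) * Fintype.card (Fin M → Fin d → Bool) := by ring
    _ ≤ δ / 2 * Fintype.card (Fin M → Fin d → Bool) := by
        gcongr
        exact mul_two_mul_exp_neg_two_mul_log_le (by linarith) hδ0 hδ1.le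
end
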